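/- arXiv:2311.02792 — 2 statements merged into one kernel-verified Lean document; each statement's English description precedes it below -/
import Mathlib

section
/- Let N be an incidence matrix of a connected signed graph Γ on n vertices. Then rank(N) = n−1 if Γ is balanced, and rank(N) = n if Γ is unbalanced. -/
open Matrix BigOperators

/-- A signed graph together with an enumeration of its edges. -/
structure SignedIncidence (n m : ℕ) where
  G : SimpleGraph (Fin n)
  sigma : Fin n → Fin n → ℤ
  sigma_symm : ∀ i j, sigma i j = sigma j i
  sigma_sign : ∀ i j, G.Adj i j → sigma i j = 1 ∨ sigma i j = -1
  ends : Fin m → Fin n × Fin n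
  ends_adj : ∀ ℓ, G.Adj (ends ℓ).1 (ends ℓ).2
  ends_inj : Function.Injective fun ℓ => Sym2.mk.uncurry (ends ℓ)
  ends_surj : ∀ e ∈ G.edgeSet, ∃ ℓ, Sym2.mk.uncurry (ends ℓ) = e

namespace SignedIncidence

variable {n m : ℕ}

def edge (S : SignedIncidence n m) (ℓ : Fin m) : Sym2 (Fin n) := Sym2.mk.uncurry (S.ends ℓ)

/-- `N` is an incidence matrix of the signed graph `S`. -/
def IsIncidence (S : SignedIncidence n m) (N : Matrix (Fin n) (Fin m) ℝ) : Prop :=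
  ∀ ℓ : Fin m,
    N (S.ends ℓ).1 ℓ * N (S.ends ℓ).2 ℓ = -((S.sigma (S.ends ℓ).1 (S.ends ℓ).2 : ℤ) : ℝ) ∧
    (N (S.ends ℓ).1 ℓ = 1 ∨ N (S.ends ℓ).1 ℓ = -1) ∧
    (N (S.ends ℓ).2 ℓ = 1 ∨ N (S.ends ℓ).2 ℓ = -1) ∧
    ∀ k, k ≠ (S.ends ℓ).1 → k ≠ (S.ends ℓ).2 → N k ℓ = 0

/-- The sign of a walk (in the graph or any subgraph): product of edge signs. -/
def walkSign (S : SignedIncidence n m) {G' : SimpleGraph (Fin n)} {i j : Fin n}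
    (w : G'.Walk i j) : ℤ :=
  (w.darts.map fun d => S.sigma d.toProd.1 d.toProd.2).prod

/-- A signed graph is balanced if every closed walk has sign `+1`. -/
def Balanced (S : SignedIncidence n m) : Prop :=
  ∀ (i : Fin n) (w : S.G.Walk i i), S.walkSign w = 1

end SignedIncidence

/-!
Since `rank N = n - dim ker Nᵀ`, it suffices to describe `ker Nᵀ`. A column of `N` has the two
entries `±1` with product `-σ(e)`, so `x ∈ ker Nᵀ` means exactly `x j = σ(ij) x i` along every
edge `ij`, hence `x j = σ(w) x i` along every walk `w` from `i` to `j`. If `Γ` is balanced, the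
sign of a walk from a base vertex depends only on its endpoint, and the resulting potential spans
the kernel. If `Γ` has a closed walk of sign `-1` at `i`, then `x i = -x i`, so `x i = 0` and
connectivity forces `x = 0`.
-/

theorem Matrix.rank_add_finrank_ker_transpose {m n K : Type*} [Fintype m] [Fintype n]
    [DecidableEq m] [Field K] (A : Matrix m n K) :
    A.rank + Module.finrank K (LinearMap.ker Aᵀ.mulVecLin) = Fintype.card m := by
  rw [← rank_transpose, Matrix.rank, LinearMap.finrank_range_add_finrank_ker,
    Module.finrank_fintype_fun_eq_card]

theorem mul_add_mul_eq_zero_iff_eq_mul {R : Type*} [CommRing R] [IsDomain R] {p q s u v : R}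
    (hq : q * q = 1) (hpq : p * q = -s) : p * u + q * v = 0 ↔ v = s * u := by
  have hq0 : q ≠ 0 := left_ne_zero_of_mul_eq_one hq
  have : q * (p * u + q * v) = v - s * u := by linear_combination u * hpq + v * hq
  rw [← mul_right_inj' hq0, this, mul_zero, sub_eq_zero]

namespace SignedIncidence

open SimpleGraph

variable {n m : ℕ} (S : SignedIncidence n m)

section walkSign

variable {G' : SimpleGraph (Fin n)}

@[simp]
lemma walkSign_nil {i : Fin n} : S.walkSign (Walk.nil : G'.Walk i i) = 1 := rfl

@[simp]
lemma walkSign_cons {i j k : Fin n} (h : G'.Adj i j) (p : G'.Walk j k) :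
    S.walkSign (Walk.cons h p) = S.sigma i j * S.walkSign p := by
  simp [walkSign]

@[simp]
lemma walkSign_append {i j k : Fin n} (p : G'.Walk i j) (q : G'.Walk j k) :
    S.walkSign (p.append q) = S.walkSign p * S.walkSign q := by
  simp [walkSign, Walk.darts_append]

@[simp]
lemma walkSign_reverse {i j : Fin n} (p : G'.Walk i j) : S.walkSign p.reverse = S.walkSign p := by
  simp only [walkSign, Walk.darts_reverse, List.map_reverse, List.map_map, List.prod_reverse]
  congr 1
  exact List.map_congr_left fun d _ => S.sigma_symm _ _

end walkSign

lemma Balanced.walkSign_eq {S : SignedIncidence n m} (hS : S.Balanced) {i j : Fin n}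
    (p q : S.G.Walk i j) : S.walkSign p = S.walkSign q :=
  Int.eq_of_mul_eq_one (by simpa using hS i (p.append q.reverse))

lemma sigma_mul_self {i j : Fin n} (h : S.G.Adj i j) : (S.sigma i j : ℝ) * S.sigma i j = 1 := by
  rcases S.sigma_sign i j h with hs | hs <;> simp [hs]

def IsSignCompatible (x : Fin n → ℝ) : Prop :=
  ∀ i j, S.G.Adj i j → x j = S.sigma i j * x i

variable {S}

lemma IsSignCompatible.apply_eq_walkSign_mul {x : Fin n → ℝ} (hx : S.IsSignCompatible x)
    {i j : Fin n} (w : S.G.Walk i j) : x j = S.walkSign w * x i := by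
  induction w with
  | nil => simp
  | cons h p ih => rw [ih, walkSign_cons, hx _ _ h]; push_cast; ring

lemma isSignCompatible_of_ends {x : Fin n → ℝ}
    (hx : ∀ ℓ, x (S.ends ℓ).2 = S.sigma (S.ends ℓ).1 (S.ends ℓ).2 * x (S.ends ℓ).1) :
    S.IsSignCompatible x := by
  intro i j hij
  obtain ⟨ℓ, hℓ⟩ := S.ends_surj s(i, j) hij
  have hxℓ := hx ℓ
  generalize S.ends ℓ = e at hℓ hxℓ
  obtain ⟨a, b⟩ := e
  rcases Sym2.eq_iff.mp hℓ with ⟨rfl, rfl⟩ | ⟨rfl, rfl⟩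
  · exact hxℓ
  · simp only at hxℓ hij ⊢
    rw [hxℓ, ← mul_assoc, S.sigma_symm b a, S.sigma_mul_self hij.symm, one_mul]

namespace IsIncidence

variable {N : Matrix (Fin n) (Fin m) ℝ}

lemma transpose_mulVec_apply (hN : S.IsIncidence N)
    (x : Fin n → ℝ) (ℓ : Fin m) :
    (Nᵀ *ᵥ x) ℓ =
      N (S.ends ℓ).1 ℓ * x (S.ends ℓ).1 + N (S.ends ℓ).2 ℓ * x (S.ends ℓ).2 := by
  simp only [mulVec, dotProduct, transpose_apply]
  refine Fintype.sum_eq_add _ _ (S.ends_adj ℓ).ne fun k hk => ?_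
  rw [(hN ℓ).2.2.2 k hk.1 hk.2, zero_mul]

lemma mem_ker_iff (hN : S.IsIncidence N) (x : Fin n → ℝ) :
    x ∈ LinearMap.ker Nᵀ.mulVecLin ↔ S.IsSignCompatible x := by
  have hcol : ∀ ℓ, (Nᵀ *ᵥ x) ℓ = 0 ↔
      x (S.ends ℓ).2 = S.sigma (S.ends ℓ).1 (S.ends ℓ).2 * x (S.ends ℓ).1 := fun ℓ => by
    obtain ⟨hprod, -, hb, -⟩ := hN ℓ
    rw [hN.transpose_mulVec_apply]
    exact mul_add_mul_eq_zero_iff_eq_mul (by rcases hb with hb | hb <;> simp [hb]) hprod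
  rw [LinearMap.mem_ker, mulVecLin_apply, funext_iff]
  simp only [Pi.zero_apply, hcol]
  exact ⟨isSignCompatible_of_ends, fun hx ℓ => hx _ _ (S.ends_adj ℓ)⟩

end IsIncidence

/-- The sign of a chosen walk from `v₀`; on a balanced graph it does not depend on the choice. -/
noncomputable def potential (S : SignedIncidence n m) (hconn : S.G.Connected) (v₀ i : Fin n) :
    ℝ :=
  S.walkSign (hconn v₀ i).some

lemma potential_eq_walkSign (hS : S.Balanced) (hconn : S.G.Connected) {v₀ i : Fin n}
    (w : S.G.Walk v₀ i) : S.potential hconn v₀ i = S.walkSign w := by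
  rw [potential, hS.walkSign_eq _ w]

lemma isSignCompatible_potential (hS : S.Balanced) (hconn : S.G.Connected) (v₀ : Fin n) :
    S.IsSignCompatible (S.potential hconn v₀) := by
  intro i j hij
  let w := (hconn v₀ i).some
  rw [potential_eq_walkSign hS hconn (w.concat hij), Walk.concat, walkSign_append,
    potential_eq_walkSign hS hconn w, walkSign_cons, walkSign_nil]
  push_cast
  ring

lemma IsSignCompatible.eq_smul_potential (hconn : S.G.Connected) (v₀ : Fin n)
    {x : Fin n → ℝ} (hx : S.IsSignCompatible x) : x = x v₀ • S.potential hconn v₀ := by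
  funext i
  rw [hx.apply_eq_walkSign_mul (hconn v₀ i).some, Pi.smul_apply, smul_eq_mul, potential, mul_comm]

lemma potential_ne_zero (hS : S.Balanced) (hconn : S.G.Connected) (v₀ : Fin n) :
    S.potential hconn v₀ ≠ 0 := fun h => by
  simpa [potential_eq_walkSign hS hconn Walk.nil] using congrFun h v₀

lemma IsSignCompatible.eq_zero (hS : ¬ S.Balanced) (hconn : S.G.Connected) {x : Fin n → ℝ}
    (hx : S.IsSignCompatible x) : x = 0 := by
  obtain ⟨i, w, hw⟩ : ∃ i, ∃ w : S.G.Walk i i, S.walkSign w ≠ 1 := by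
    simpa [Balanced] using hS
  have hxi : x i = 0 :=
    (mul_left_eq_self₀.mp (hx.apply_eq_walkSign_mul w).symm).resolve_left (by exact_mod_cast hw)
  funext j
  simp [hx.apply_eq_walkSign_mul (hconn i j).some, hxi]

namespace IsIncidence

variable {N : Matrix (Fin n) (Fin m) ℝ}

lemma ker_transpose_eq_span_potential (hN : S.IsIncidence N) (hS : S.Balanced)
    (hconn : S.G.Connected) (v₀ : Fin n) :
    LinearMap.ker Nᵀ.mulVecLin = Submodule.span ℝ {S.potential hconn v₀} := by
  refine le_antisymm (fun x hx => ?_) ?_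
  · rw [Submodule.mem_span_singleton]
    exact ⟨x v₀, (((hN.mem_ker_iff x).mp hx).eq_smul_potential hconn v₀).symm⟩
  · rw [Submodule.span_singleton_le_iff_mem, hN.mem_ker_iff]
    exact isSignCompatible_potential hS hconn v₀

lemma finrank_ker_transpose_eq_one (hN : S.IsIncidence N) (hS : S.Balanced)
    (hconn : S.G.Connected) : Module.finrank ℝ (LinearMap.ker Nᵀ.mulVecLin) = 1 := by
  obtain ⟨v₀⟩ := hconn.nonempty
  rw [hN.ker_transpose_eq_span_potential hS hconn v₀,
    finrank_span_singleton (potential_ne_zero hS hconn v₀)]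

lemma ker_transpose_eq_bot (hN : S.IsIncidence N) (hS : ¬ S.Balanced) (hconn : S.G.Connected) :
    LinearMap.ker Nᵀ.mulVecLin = ⊥ :=
  (Submodule.eq_bot_iff _).mpr fun x hx => ((hN.mem_ker_iff x).mp hx).eq_zero hS hconn

end IsIncidence

end SignedIncidence

theorem incidence_rank {n m : ℕ} (S : SignedIncidence n m) (hconn : S.G.Connected)
    (N : Matrix (Fin n) (Fin m) ℝ) (hN : S.IsIncidence N) :
    (S.Balanced → N.rank = n - 1) ∧ (¬ S.Balanced → N.rank = n) := by
  have hrank := N.rank_add_finrank_ker_transpose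
  rw [Fintype.card_fin] at hrank
  constructor
  · intro hS
    rw [hN.finrank_ker_transpose_eq_one hS hconn] at hrank
    omega
  · intro hS
    rw [hN.ker_transpose_eq_bot hS hconn, finrank_bot] at hrank
    omega
end

section
/- Let A be an n×m real matrix of rank r > 0. Then A† = (1/vol²A) Σ vol²A(i₁,…,i_r)·A(i₁,…,i_r)†, where the sum runs over all r-subsets of columns {i₁<…<i_r} for which the matrix A(i₁,…,i_r) (equal to A with all other columns replaced by zero columns) has rank r, and vol²B denotes the sum of squares of all r×r minors of B. -/
open Matrix BigOperators

/-- `X` is a Moore-Penrose inverse of `A`. -/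
def IsMoorePenrose {p q : ℕ} (A : Matrix (Fin p) (Fin q) ℝ) (X : Matrix (Fin q) (Fin p) ℝ) : Prop :=
  A * X * A = A ∧ X * A * X = X ∧ (A * X)ᵀ = A * X ∧ (X * A)ᵀ = X * A

open scoped Classical in
/-- The sum of squares of all `r × r` minors of a matrix. -/
noncomputable def vol2 (r : ℕ) {p q : ℕ} (B : Matrix (Fin p) (Fin q) ℝ) : ℝ :=
  ∑ f ∈ Finset.univ.filter (fun f : Fin r → Fin p => StrictMono f),
    ∑ g ∈ Finset.univ.filter (fun g : Fin r → Fin q => StrictMono g),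
      ((B.submatrix f g).det) ^ 2

/-- `A` with all columns outside `s` replaced by zero columns. -/
def maskCols {p q : ℕ} (A : Matrix (Fin p) (Fin q) ℝ) (s : Finset (Fin q)) :
    Matrix (Fin p) (Fin q) ℝ :=
  Matrix.of fun i j => if j ∈ s then A i j else 0

/-!
Factor `A = C * R` with `C` of full column rank and `R` of full row rank. Then
`A† = Rᵀ (R Rᵀ)⁻¹ (Cᵀ C)⁻¹ Cᵀ`, and since `maskCols A s = C * R_s` with `R_s := maskCols R s`,
the same formula computes `(maskCols A s)†` whenever `R_s` has rank `r`. By Cauchy–Binet,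
`vol² (C * M) = det (Cᵀ C) * det (M Mᵀ)`, so after cancelling `det (Cᵀ C)` and `(Cᵀ C)⁻¹ Cᵀ`
the claim becomes `∑_{|s| = r} R_sᵀ adj (R_s R_sᵀ) = Rᵀ adj (R Rᵀ)`. By Cramer's rule the
`(j, i)` entry of `Mᵀ adj (M Mᵀ)` is `det (M[i ← e_j] Mᵀ)`, and Cauchy–Binet splits
`det (R[i ← e_j] Rᵀ)` into exactly these determinants for the masks `R_s`. A mask of rank
below `r` contributes nothing, as then every `R_s[i ← e_j] R_sᵀ` has rank below `r`.
-/

open Finset Function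

section CauchyBinet

variable {R m : Type*} [CommRing R] [Fintype m] {r : ℕ}

theorem Matrix.det_mul_eq_sum_det_submatrix_mul_prod (L : Matrix (Fin r) m R)
    (W : Matrix m (Fin r) R) :
    (L * W).det = ∑ p : Fin r → m, (L.submatrix id p).det * ∏ i, W (p i) i := by
  simp only [det_apply', mul_apply, prod_univ_sum, mul_sum, Fintype.piFinset_univ, sum_mul,
    submatrix_apply, id, prod_mul_distrib]
  rw [sum_comm]
  simp only [mul_assoc]

open scoped Classical in
theorem Finset.sum_injective_eq_sum_strictMono_comp_perm [LinearOrder m] {M : Type*}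
    [AddCommMonoid M] (φ : (Fin r → m) → M) :
    ∑ p ∈ univ.filter Injective, φ p =
      ∑ g ∈ univ.filter StrictMono, ∑ σ : Equiv.Perm (Fin r), φ (g ∘ σ) := by
  rw [← sum_product']
  symm
  refine sum_nbij (fun x ↦ x.1 ∘ x.2) ?_ ?_ ?_ fun _ _ ↦ rfl
  · rintro ⟨g, σ⟩ hx
    simp only [mem_product, mem_filter, mem_univ, true_and, and_true] at hx ⊢
    exact hx.injective.comp σ.injective
  · rintro ⟨g, σ⟩ hx ⟨g', σ'⟩ hx' h
    simp only [mem_coe, mem_product, mem_filter, mem_univ, true_and, and_true] at hx hx' h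
    have hg : g = g' := (hx.range_inj hx').1 (by
      rw [← σ.surjective.range_comp g, h, σ'.surjective.range_comp])
    subst hg
    exact Prod.ext rfl (Equiv.coe_fn_injective (hx.injective.comp_left h))
  · intro p hp
    simp only [coe_filter, mem_univ, true_and, Set.mem_ofPred_eq] at hp
    refine ⟨(p ∘ Tuple.sort p, (Tuple.sort p)⁻¹), ?_, ?_⟩
    · simp only [coe_product, coe_filter, mem_univ, true_and, Set.mem_prod,
        Set.mem_ofPred_eq, coe_univ, Set.mem_univ, and_true]
      exact (Tuple.monotone_sort p).strictMono_of_injective (hp.comp (Tuple.sort p).injective)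
    · ext i
      simp

open scoped Classical in
theorem Matrix.det_mul_eq_sum_strictMono [LinearOrder m] (L : Matrix (Fin r) m R)
    (W : Matrix m (Fin r) R) :
    (L * W).det = ∑ g ∈ univ.filter StrictMono,
      (L.submatrix id g).det * (W.submatrix g id).det := by
  have hinj : ∀ p ∉ univ.filter Injective, (L.submatrix id p).det * ∏ i, W (p i) i = 0 := by
    intro p hp
    simp only [mem_filter, mem_univ, true_and, Injective, not_forall] at hp
    obtain ⟨i, j, hij, hne⟩ := hp
    rw [det_zero_of_column_eq hne (fun k ↦ by simp [hij]), zero_mul]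
  rw [det_mul_eq_sum_det_submatrix_mul_prod, ← sum_subset (subset_univ _) fun p _ ↦ hinj p,
    sum_injective_eq_sum_strictMono_comp_perm]
  refine sum_congr rfl fun g _ ↦ ?_
  simp only [det_apply' (W.submatrix g id), mul_sum]
  refine sum_congr rfl fun σ _ ↦ ?_
  rw [show L.submatrix id (g ∘ σ) = (L.submatrix id g).submatrix id σ from rfl, det_permute',
    mul_assoc, mul_left_comm]
  rfl

open scoped Classical in
theorem Matrix.det_mul_transpose_eq_sum_sq [LinearOrder m] (M : Matrix (Fin r) m R) :
    (M * Mᵀ).det = ∑ g ∈ univ.filter StrictMono, (M.submatrix id g).det ^ 2 := by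
  rw [det_mul_eq_sum_strictMono]
  refine sum_congr rfl fun g _ ↦ ?_
  rw [← transpose_submatrix, det_transpose, sq]

open scoped Classical in
theorem Matrix.det_transpose_mul_eq_sum_sq [LinearOrder m] (C : Matrix m (Fin r) R) :
    (Cᵀ * C).det = ∑ f ∈ univ.filter StrictMono, (C.submatrix f id).det ^ 2 := by
  simpa [← transpose_submatrix] using det_mul_transpose_eq_sum_sq Cᵀ

end CauchyBinet

namespace Matrix

variable {l m n : Type*} [Fintype m] [Fintype n] [DecidableEq n]

theorem mul_adjugate_mul_apply {R : Type*} [CommRing R] [DecidableEq m] (L : Matrix n m R)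
    (W : Matrix m n R) (j : m) (i : n) :
    (W * adjugate (L * W)) j i = (L.updateRow i (Pi.single j 1) * W).det := by
  rw [updateRow_mul, single_one_vecMul, ← transpose_apply (W * _), transpose_mul,
    adjugate_transpose]
  change ((L * W)ᵀ.adjugate *ᵥ W.row j) i = _
  rw [← cramer_eq_adjugate_mulVec, cramer_apply, updateCol_transpose, det_transpose]

variable {K : Type*} [Field K]

theorem exists_eq_mul_of_rank_eq {r : ℕ} {A : Matrix m n K} (hr : A.rank = r) :
    ∃ (C : Matrix m (Fin r) K) (R : Matrix (Fin r) n K), A = C * R := by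
  let b := Module.finBasisOfFinrankEq K (LinearMap.range A.mulVecLin) hr
  refine ⟨LinearMap.toMatrix b (Pi.basisFun K m) (LinearMap.range A.mulVecLin).subtype,
    LinearMap.toMatrix (Pi.basisFun K n) b A.mulVecLin.rangeRestrict, ?_⟩
  rw [← LinearMap.toMatrix_comp]
  exact (LinearMap.toMatrix'_toLin' A).symm

theorem det_ne_zero_of_rank_eq_card {B : Matrix n n K} (h : B.rank = Fintype.card n) :
    B.det ≠ 0 := by
  rw [← isUnit_iff_ne_zero, ← isUnit_iff_isUnit_det, ← mulVec_surjective_iff_isUnit]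
  change Function.Surjective B.mulVecLin
  rw [← LinearMap.range_eq_top]
  apply Submodule.eq_top_of_finrank_eq
  rwa [Module.finrank_fintype_fun_eq_card]

theorem rank_mul_eq_right_of_mul_eq_one {P : Matrix n m K} {C : Matrix m n K} (hPC : P * C = 1)
    [Fintype l] (M : Matrix n l K) : (C * M).rank = M.rank :=
  (rank_mul_le_right C M).antisymm <| by
    simpa [← Matrix.mul_assoc, hPC] using rank_mul_le_right P (C * M)

variable [LinearOrder K] [IsStrictOrderedRing K]

theorem rank_eq_card_iff_det_mul_transpose_ne_zero (M : Matrix n m K) :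
    M.rank = Fintype.card n ↔ (M * Mᵀ).det ≠ 0 := by
  rw [← rank_self_mul_transpose]
  exact ⟨det_ne_zero_of_rank_eq_card, rank_of_det_ne_zero⟩

theorem exists_eq_mul_det_ne_zero {r : ℕ} {A : Matrix m n K} (hr : A.rank = r) :
    ∃ (C : Matrix m (Fin r) K) (R : Matrix (Fin r) n K),
      A = C * R ∧ (Cᵀ * C).det ≠ 0 ∧ (R * Rᵀ).det ≠ 0 := by
  obtain ⟨C, R, rfl⟩ := exists_eq_mul_of_rank_eq hr
  have hCr : Cᵀ.rank = Fintype.card (Fin r) := by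
    rw [rank_transpose]
    exact (rank_le_card_width C).antisymm (by simpa [hr] using rank_mul_le_left C R)
  have hRr : R.rank = Fintype.card (Fin r) :=
    (rank_le_card_height R).antisymm (by simpa [hr] using rank_mul_le_right C R)
  refine ⟨C, R, rfl, ?_, (rank_eq_card_iff_det_mul_transpose_ne_zero R).1 hRr⟩
  simpa using (rank_eq_card_iff_det_mul_transpose_ne_zero Cᵀ).1 hCr

theorem transpose_mul_adjugate_eq_zero {M : Matrix n m K} (h : (M * Mᵀ).det = 0) :
    Mᵀ * adjugate (M * Mᵀ) = 0 := by
  classical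
  have hM : M.rank < Fintype.card n :=
    (rank_le_card_height M).lt_of_ne fun h' ↦ (rank_eq_card_iff_det_mul_transpose_ne_zero M).1 h' h
  ext j i
  rw [mul_adjugate_mul_apply, zero_apply]
  by_contra hdet
  have := (rank_mul_le_right (M.updateRow i (Pi.single j 1)) Mᵀ).trans_eq (rank_transpose M)
  rw [rank_of_det_ne_zero hdet] at this
  omega

end Matrix

namespace IsMoorePenrose

variable {p q r : ℕ}

theorem unique {A : Matrix (Fin p) (Fin q) ℝ} {X Y : Matrix (Fin q) (Fin p) ℝ}
    (hX : IsMoorePenrose A X) (hY : IsMoorePenrose A Y) : X = Y := by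
  obtain ⟨hAXA, hXAX, hAX, hXA⟩ := hX
  obtain ⟨hAYA, hYAY, hAY, hYA⟩ := hY
  have hAX_eq : A * X = A * Y :=
    calc A * X = (A * X)ᵀ := hAX.symm
      _ = (A * Y * (A * X))ᵀ := by rw [← Matrix.mul_assoc, hAYA]
      _ = A * X * (A * Y) := by rw [transpose_mul, hAX, hAY]
      _ = A * Y := by rw [← Matrix.mul_assoc, hAXA]
  have hXA_eq : X * A = Y * A :=
    calc X * A = (X * A)ᵀ := hXA.symm
      _ = (X * A * (Y * A))ᵀ := by
        rw [← Matrix.mul_assoc, Matrix.mul_assoc X A Y, Matrix.mul_assoc X, hAYA]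
      _ = Y * A * (X * A) := by rw [transpose_mul, hXA, hYA]
      _ = Y * A := by rw [Matrix.mul_assoc, ← Matrix.mul_assoc A, hAXA]
  calc X = X * A * X := hXAX.symm
    _ = Y * A * Y := by rw [hXA_eq, Matrix.mul_assoc, hAX_eq, ← Matrix.mul_assoc]
    _ = Y := hYAY

theorem mul {C : Matrix (Fin p) (Fin r) ℝ} {R : Matrix (Fin r) (Fin q) ℝ}
    {P : Matrix (Fin r) (Fin p) ℝ} {Q : Matrix (Fin q) (Fin r) ℝ} (hPC : P * C = 1)
    (hRQ : R * Q = 1) (hCP : (C * P)ᵀ = C * P) (hQR : (Q * R)ᵀ = Q * R) :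
    IsMoorePenrose (C * R) (Q * P) := by
  have hAX : C * R * (Q * P) = C * P := by
    rw [Matrix.mul_assoc, ← Matrix.mul_assoc R, hRQ, Matrix.one_mul]
  have hXA : Q * P * (C * R) = Q * R := by
    rw [Matrix.mul_assoc, ← Matrix.mul_assoc P, hPC, Matrix.one_mul]
  refine ⟨?_, ?_, hAX ▸ hCP, hXA ▸ hQR⟩
  · rw [hAX, Matrix.mul_assoc, ← Matrix.mul_assoc P, hPC, Matrix.one_mul]
  · rw [hXA, Matrix.mul_assoc, ← Matrix.mul_assoc R, hRQ, Matrix.one_mul]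

theorem mul_of_det_ne_zero {C : Matrix (Fin p) (Fin r) ℝ} {R : Matrix (Fin r) (Fin q) ℝ}
    (hC : (Cᵀ * C).det ≠ 0) (hR : (R * Rᵀ).det ≠ 0) :
    IsMoorePenrose (C * R) (Rᵀ * (R * Rᵀ)⁻¹ * ((Cᵀ * C)⁻¹ * Cᵀ)) := by
  refine mul ?_ ?_ ?_ ?_
  · rw [Matrix.mul_assoc, nonsing_inv_mul _ (isUnit_iff_ne_zero.2 hC)]
  · rw [← Matrix.mul_assoc, mul_nonsing_inv _ (isUnit_iff_ne_zero.2 hR)]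
  · simp [Matrix.mul_assoc, transpose_nonsing_inv]
  · simp [Matrix.mul_assoc, transpose_nonsing_inv]

end IsMoorePenrose

section Masks

variable {p q r : ℕ}

theorem maskCols_mul (C : Matrix (Fin p) (Fin r) ℝ) (M : Matrix (Fin r) (Fin q) ℝ)
    (s : Finset (Fin q)) : maskCols (C * M) s = C * maskCols M s := by
  ext i j
  by_cases hj : j ∈ s <;> simp [maskCols, mul_apply, hj]

theorem maskCols_image_mul {n : ℕ} (L : Matrix (Fin p) (Fin q) ℝ) (W : Matrix (Fin q) (Fin n) ℝ)
    {g : Fin r → Fin q} (hg : Injective g) :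
    maskCols L (univ.image g) * W = L.submatrix id g * W.submatrix g id := by
  ext a b
  simp only [mul_apply, maskCols, of_apply, ite_mul, zero_mul, sum_ite_mem, univ_inter,
    sum_image hg.injOn, submatrix_apply, id]

theorem det_mul_eq_sum_det_maskCols_mul (L : Matrix (Fin r) (Fin q) ℝ)
    (W : Matrix (Fin q) (Fin r) ℝ) :
    (L * W).det = ∑ s ∈ univ.filter (·.card = r), (maskCols L s * W).det := by
  rw [det_mul_eq_sum_strictMono]
  refine sum_nbij (fun g ↦ univ.image g) ?_ ?_ ?_ fun g hg ↦ ?_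
  · intro g hg
    simp only [mem_filter, mem_univ, true_and] at hg ⊢
    rw [card_image_of_injective _ hg.injective, card_univ, Fintype.card_fin]
  · intro g hg g' hg' h
    simp only [coe_filter, mem_univ, true_and, Set.mem_ofPred_eq] at hg hg' h
    refine (hg.range_inj hg').1 ?_
    simpa [← coe_inj] using h
  · intro s hs
    simp only [coe_filter, mem_univ, true_and, Set.mem_ofPred_eq] at hs
    exact ⟨s.orderEmbOfFin hs, by simp [(s.orderEmbOfFin hs).strictMono],
      image_orderEmbOfFin_univ s hs⟩
  · simp only [mem_filter, mem_univ, true_and] at hg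
    rw [maskCols_image_mul L W hg.injective, det_mul]

theorem updateRow_maskCols_mul_transpose (M : Matrix (Fin r) (Fin q) ℝ) (s : Finset (Fin q))
    (i : Fin r) (j : Fin q) :
    (maskCols M s).updateRow i (Pi.single j 1) * (maskCols M s)ᵀ =
      maskCols (M.updateRow i (Pi.single j 1)) s * Mᵀ := by
  ext a b
  by_cases ha : a = i <;>
    simp [mul_apply, maskCols, updateRow_apply, ha, Pi.single_apply]

theorem sum_transpose_mul_adjugate_maskCols (M : Matrix (Fin r) (Fin q) ℝ) :
    ∑ s ∈ univ.filter (·.card = r), (maskCols M s)ᵀ * adjugate (maskCols M s * (maskCols M s)ᵀ) =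
      Mᵀ * adjugate (M * Mᵀ) := by
  ext j i
  rw [Matrix.sum_apply, mul_adjugate_mul_apply, det_mul_eq_sum_det_maskCols_mul]
  refine sum_congr rfl fun s _ ↦ ?_
  rw [mul_adjugate_mul_apply, updateRow_maskCols_mul_transpose]

end Masks

section Volume

variable {p q r : ℕ}

theorem vol2_mul (C : Matrix (Fin p) (Fin r) ℝ) (M : Matrix (Fin r) (Fin q) ℝ) :
    vol2 r (C * M) = (Cᵀ * C).det * (M * Mᵀ).det := by
  rw [vol2, det_transpose_mul_eq_sum_sq, det_mul_transpose_eq_sum_sq, sum_mul_sum]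
  refine sum_congr rfl fun f _ ↦ sum_congr rfl fun g _ ↦ ?_
  rw [submatrix_mul C M f id g bijective_id, det_mul, mul_pow]

theorem vol2_smul_eq_of_isMoorePenrose {C : Matrix (Fin p) (Fin r) ℝ}
    {M : Matrix (Fin r) (Fin q) ℝ} (hC : (Cᵀ * C).det ≠ 0) (hM : (M * Mᵀ).det ≠ 0)
    {Y : Matrix (Fin q) (Fin p) ℝ} (hY : IsMoorePenrose (C * M) Y) :
    vol2 r (C * M) • Y = (Cᵀ * C).det • (Mᵀ * adjugate (M * Mᵀ) * ((Cᵀ * C)⁻¹ * Cᵀ)) := by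
  rw [hY.unique (.mul_of_det_ne_zero hC hM), vol2_mul, mul_smul]
  congr 1
  rw [← Matrix.smul_mul, ← Matrix.mul_smul, Matrix.inv_def, Ring.inverse_eq_inv', smul_smul,
    mul_inv_cancel₀ hM, one_smul]

theorem ite_rank_vol2_smul_eq {C : Matrix (Fin p) (Fin r) ℝ} (hC : (Cᵀ * C).det ≠ 0)
    {M : Matrix (Fin r) (Fin q) ℝ} {Y : Matrix (Fin q) (Fin p) ℝ}
    (hY : IsMoorePenrose (C * M) Y) :
    (if (C * M).rank = r then vol2 r (C * M) • Y else 0) =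
      (Cᵀ * C).det • (Mᵀ * adjugate (M * Mᵀ) * ((Cᵀ * C)⁻¹ * Cᵀ)) := by
  have hrank : (C * M).rank = r ↔ (M * Mᵀ).det ≠ 0 := by
    rw [rank_mul_eq_right_of_mul_eq_one (P := (Cᵀ * C)⁻¹ * Cᵀ)
      (by rw [Matrix.mul_assoc, nonsing_inv_mul _ (isUnit_iff_ne_zero.2 hC)])]
    simpa using rank_eq_card_iff_det_mul_transpose_ne_zero M
  by_cases hM : (M * Mᵀ).det = 0
  · rw [if_neg (mt hrank.1 (not_not.2 hM)), transpose_mul_adjugate_eq_zero hM,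
      Matrix.zero_mul, smul_zero]
  · rw [if_pos (hrank.2 hM)]
    exact vol2_smul_eq_of_isMoorePenrose hC hM hY

end Volume

open scoped Classical in
theorem moore_penrose_volume_formula_general {p q r : ℕ} (A : Matrix (Fin p) (Fin q) ℝ)
    (hr : A.rank = r)
    (X : Matrix (Fin q) (Fin p) ℝ) (hX : IsMoorePenrose A X)
    (Y : Finset (Fin q) → Matrix (Fin q) (Fin p) ℝ)
    (hY : ∀ s, IsMoorePenrose (maskCols A s) (Y s)) :
    X = (vol2 r A)⁻¹ •
      ∑ s ∈ Finset.univ.filter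
          (fun s : Finset (Fin q) => s.card = r ∧ (maskCols A s).rank = r),
        vol2 r (maskCols A s) • Y s := by
  obtain ⟨C, R, rfl, hC, hR⟩ := exists_eq_mul_det_ne_zero hr
  have hsum : ∑ s ∈ univ.filter (fun s ↦ s.card = r ∧ (maskCols (C * R) s).rank = r),
      vol2 r (maskCols (C * R) s) • Y s = vol2 r (C * R) • X := by
    rw [← filter_filter, sum_filter]
    calc _ = ∑ s ∈ univ.filter (·.card = r), (Cᵀ * C).det •
          ((maskCols R s)ᵀ * adjugate (maskCols R s * (maskCols R s)ᵀ) * ((Cᵀ * C)⁻¹ * Cᵀ)) :=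
          sum_congr rfl fun s _ ↦ by
            simpa only [maskCols_mul] using ite_rank_vol2_smul_eq hC (maskCols_mul C R s ▸ hY s)
      _ = vol2 r (C * R) • X := by
        rw [← smul_sum, ← Matrix.sum_mul, sum_transpose_mul_adjugate_maskCols,
          vol2_smul_eq_of_isMoorePenrose hC hR hX]
  rw [hsum, inv_smul_smul₀ (vol2_mul C R ▸ mul_ne_zero hC hR)]

open scoped Classical in
theorem moore_penrose_volume_formula {p q r : ℕ} (A : Matrix (Fin p) (Fin q) ℝ)
    (hr : A.rank = r) (hr0 : 0 < r)
    (X : Matrix (Fin q) (Fin p) ℝ) (hX : IsMoorePenrose A X)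
    (Y : Finset (Fin q) → Matrix (Fin q) (Fin p) ℝ)
    (hY : ∀ s, IsMoorePenrose (maskCols A s) (Y s)) :
    X = (vol2 r A)⁻¹ •
      ∑ s ∈ Finset.univ.filter
          (fun s : Finset (Fin q) => s.card = r ∧ (maskCols A s).rank = r),
        vol2 r (maskCols A s) • Y s :=
  moore_penrose_volume_formula_general A hr X hX Y hY
end
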